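/- arXiv:1105.0553 — 2 statements merged into one kernel-verified Lean document; each statement's English description precedes it below -/
import Mathlib

section
/- Loewner's torus inequality with isosystolic defect: for any Riemannian metric g = f² g₀ on T², where g₀ is the unit-area flat metric ℝ²/(ℤτ + ℤ1)/√Im(τ) in the conformal class of g with τ in the standard fundamental domain, area(g) − Im(τ)·sys(g)² ≥ Var(f). -/
/-- Euclidean norm on `ℝ × ℝ`. -/
noncomputable def eNorm (p : ℝ × ℝ) : ℝ := Real.sqrt (p.1 ^ 2 + p.2 ^ 2)

/-- Integral of a doubly periodic function over the fundamental domain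
`{s v₁ + t v₂ : s, t ∈ [0,1]}` of the lattice `ℤv₁ + ℤv₂` (of unit coarea). -/
noncomputable def torusInt (F : ℝ × ℝ → ℝ) (v₁ v₂ : ℝ × ℝ) : ℝ :=
  ∫ s in (0:ℝ)..1, ∫ t in (0:ℝ)..1, F (s • v₁ + t • v₂)

/-- Area of the torus with metric `f²(dx² + dy²)`. -/
noncomputable def torusArea (f : ℝ × ℝ → ℝ) (v₁ v₂ : ℝ × ℝ) : ℝ :=
  torusInt (fun p => (f p) ^ 2) v₁ v₂

/-- Mean of the conformal factor over the flat probability measure. -/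
noncomputable def torusMean (f : ℝ × ℝ → ℝ) (v₁ v₂ : ℝ × ℝ) : ℝ :=
  torusInt f v₁ v₂

/-- Variance of the conformal factor over the flat probability measure. -/
noncomputable def torusVar (f : ℝ × ℝ → ℝ) (v₁ v₂ : ℝ × ℝ) : ℝ :=
  torusInt (fun p => (f p - torusMean f v₁ v₂) ^ 2) v₁ v₂

/-- The systole of the torus `ℝ²/(ℤv₁ + ℤv₂)` with metric `f²(dx² + dy²)`:
the least `f`-length of a `C¹` loop which is noncontractible, i.e. lifts to a
path whose endpoints differ by a nonzero lattice vector. -/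
noncomputable def torusSys (f : ℝ × ℝ → ℝ) (v₁ v₂ : ℝ × ℝ) : ℝ :=
  sInf {ℓ : ℝ | ∃ γ : ℝ → ℝ × ℝ, ContDiff ℝ 1 γ ∧
    (∃ m n : ℤ, γ 1 - γ 0 = m • v₁ + n • v₂ ∧ ¬(m = 0 ∧ n = 0)) ∧
    ℓ = ∫ t in (0:ℝ)..1, f (γ t) * eNorm (deriv γ t)}

/-! Since `torusVar f = torusArea f - (torusMean f)²`, it suffices to show
`√τ₂ · sys ≤ torusMean f`. Each horizontal segment `s ↦ s v₁ + t v₂`, `s ∈ [0,1]`, closes up to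
a noncontractible loop of `f`-length `|v₁| ∫ f = (√τ₂)⁻¹ ∫ f`, so it is at least `sys`;
averaging over `t` (Fubini) gives the claim. -/

open MeasureTheory intervalIntegral

lemma intervalIntegral_unitSquare_swap {F : ℝ → ℝ → ℝ} (hF : Continuous F.uncurry) :
    ∫ s in (0:ℝ)..1, ∫ t in (0:ℝ)..1, F s t = ∫ t in (0:ℝ)..1, ∫ s in (0:ℝ)..1, F s t := by
  refine intervalIntegral_intervalIntegral_swap ?_
  refine (hF.integrableOn_Icc (a := (0, 0)) (b := (1, 1))).mono_set ?_
  simp only [Set.uIoc_of_le zero_le_one, ← Set.Icc_prod_Icc]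
  exact Set.prod_mono Set.Ioc_subset_Icc_self Set.Ioc_subset_Icc_self

section torusInt

variable {F G : ℝ × ℝ → ℝ} {v₁ v₂ : ℝ × ℝ}

lemma continuous_torusInt_integrand (hF : Continuous F) :
    Continuous fun q : ℝ × ℝ => F (q.1 • v₁ + q.2 • v₂) := by
  fun_prop

lemma continuous_torusInt_inner (hF : Continuous F) :
    Continuous fun s : ℝ => ∫ t in (0:ℝ)..1, F (s • v₁ + t • v₂) :=
  continuous_parametric_intervalIntegral_of_continuous' (continuous_torusInt_integrand hF) 0 1

lemma torusInt_add (hF : Continuous F) (hG : Continuous G) :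
    torusInt (fun p => F p + G p) v₁ v₂ = torusInt F v₁ v₂ + torusInt G v₁ v₂ := by
  have hF' := continuous_torusInt_integrand (v₁ := v₁) (v₂ := v₂) hF
  have hG' := continuous_torusInt_integrand (v₁ := v₁) (v₂ := v₂) hG
  unfold torusInt
  rw [← integral_add ((continuous_torusInt_inner hF).intervalIntegrable 0 1)
    ((continuous_torusInt_inner hG).intervalIntegrable 0 1)]
  congr 1 with s
  exact integral_add ((hF'.comp (Continuous.prodMk_right s)).intervalIntegrable 0 1)
    ((hG'.comp (Continuous.prodMk_right s)).intervalIntegrable 0 1)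

lemma torusInt_const_mul (c : ℝ) :
    torusInt (fun p => c * F p) v₁ v₂ = c * torusInt F v₁ v₂ := by
  simp only [torusInt, intervalIntegral.integral_const_mul]

lemma torusInt_const (c : ℝ) : torusInt (fun _ => c) v₁ v₂ = c := by
  simp [torusInt]

lemma torusVar_eq_torusArea_sub_torusMean_sq {f : ℝ × ℝ → ℝ} (hf : Continuous f) :
    torusVar f v₁ v₂ = torusArea f v₁ v₂ - torusMean f v₁ v₂ ^ 2 := by
  have hexpand : (fun p => (f p - torusMean f v₁ v₂) ^ 2) =
      fun p => (f p ^ 2 + (-2 * torusMean f v₁ v₂) * f p) + torusMean f v₁ v₂ ^ 2 := by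
    ext p; ring
  rw [torusVar, hexpand, torusInt_add (by fun_prop) continuous_const,
    torusInt_add (by fun_prop) (by fun_prop), torusInt_const_mul, torusInt_const, torusArea,
    torusMean]
  ring

lemma le_torusInt_of_forall_le {c : ℝ} (hF : Continuous F)
    (h : ∀ t : ℝ, c ≤ ∫ s in (0:ℝ)..1, F (s • v₁ + t • v₂)) : c ≤ torusInt F v₁ v₂ := by
  have hF' := continuous_torusInt_integrand (v₁ := v₁) (v₂ := v₂) hF
  rw [torusInt, intervalIntegral_unitSquare_swap (F := fun s t => F (s • v₁ + t • v₂)) hF']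
  have hinner : Continuous fun t : ℝ => ∫ s in (0:ℝ)..1, F (s • v₁ + t • v₂) :=
    continuous_parametric_intervalIntegral_of_continuous' (by fun_prop) 0 1
  simpa using integral_mono_on zero_le_one intervalIntegrable_const
    (hinner.intervalIntegrable (μ := volume) 0 1) fun t _ => h t

end torusInt

section torusSys

variable {f : ℝ × ℝ → ℝ} {v₁ v₂ : ℝ × ℝ}

lemma torusSys_nonneg (hf : ∀ p, 0 ≤ f p) : 0 ≤ torusSys f v₁ v₂ := by
  refine Real.sInf_nonneg ?_
  rintro ℓ ⟨γ, -, -, rfl⟩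
  exact integral_nonneg zero_le_one fun t _ => mul_nonneg (hf _) (Real.sqrt_nonneg _)

lemma torusSys_le_segment (hf : ∀ p, 0 ≤ f p) {m n : ℤ} (hmn : ¬(m = 0 ∧ n = 0))
    (p : ℝ × ℝ) :
    torusSys f v₁ v₂ ≤
      (∫ s in (0:ℝ)..1, f (s • (m • v₁ + n • v₂) + p)) * eNorm (m • v₁ + n • v₂) := by
  set w := m • v₁ + n • v₂
  have hderiv : ∀ s : ℝ, deriv (fun s : ℝ => s • w + p) s = w := fun s => by
    simpa using (((hasDerivAt_id s).smul_const w).add_const p).deriv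
  refine csInf_le ⟨0, fun ℓ ⟨γ, _, _, hℓ⟩ => ?_⟩ ⟨fun s => s • w + p, by fun_prop,
    ⟨m, n, by simp [w], hmn⟩, ?_⟩
  · exact hℓ ▸ integral_nonneg zero_le_one fun t _ => mul_nonneg (hf _) (Real.sqrt_nonneg _)
  · simp only [hderiv, intervalIntegral.integral_mul_const]

end torusSys

theorem loewner_with_defect_general (τ₂ : ℝ) (hτ₂ : 0 < τ₂)
    (v₁ v₂ : ℝ × ℝ)
    (hv₁ : v₁ = (Real.sqrt τ₂)⁻¹ • ((1:ℝ), (0:ℝ)))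
    (f : ℝ × ℝ → ℝ) (hf : Continuous f) (hpos : ∀ p, 0 < f p) :
    torusArea f v₁ v₂ - τ₂ * (torusSys f v₁ v₂) ^ 2 ≥ torusVar f v₁ v₂ := by
  have hσ : 0 < √τ₂ := Real.sqrt_pos.2 hτ₂
  have hfnonneg : ∀ p, 0 ≤ f p := fun p => (hpos p).le
  have hlen : eNorm v₁ = (√τ₂)⁻¹ := by
    simp [hv₁, eNorm, hσ.le]
  have hloop : ∀ t : ℝ, √τ₂ * torusSys f v₁ v₂ ≤ ∫ s in (0:ℝ)..1, f (s • v₁ + t • v₂) := by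
    intro t
    have h := torusSys_le_segment (v₁ := v₁) (v₂ := v₂) hfnonneg (m := 1) (n := 0) (by simp)
      (t • v₂)
    rw [one_smul, zero_smul, add_zero, hlen, le_mul_inv_iff₀ hσ] at h
    linarith
  have hmean : √τ₂ * torusSys f v₁ v₂ ≤ torusMean f v₁ v₂ := le_torusInt_of_forall_le hf hloop
  have hsq : τ₂ * torusSys f v₁ v₂ ^ 2 ≤ torusMean f v₁ v₂ ^ 2 := by
    have := pow_le_pow_left₀ (mul_nonneg hσ.le (torusSys_nonneg hfnonneg)) hmean 2
    rwa [mul_pow, Real.sq_sqrt hτ₂.le] at this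
  rw [torusVar_eq_torusArea_sub_torusMean_sq hf]
  linarith

/-- Loewner's torus inequality with isosystolic defect:
`area(g) − Im(τ) · sys(g)² ≥ Var(f)` for `g = f² g₀`, where `g₀` is the
unit-area flat metric with deck lattice spanned by `(1,0)/√Im τ` and
`(τ₁,τ₂)/√Im τ`, `τ` in the standard fundamental domain. -/
theorem loewner_with_defect (τ₁ τ₂ : ℝ) (hτ₂ : 0 < τ₂)
    (hfund₁ : 1 ≤ τ₁ ^ 2 + τ₂ ^ 2) (hfund₂ : |τ₁| ≤ 1 / 2)
    (v₁ v₂ : ℝ × ℝ)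
    (hv₁ : v₁ = (Real.sqrt τ₂)⁻¹ • ((1:ℝ), (0:ℝ)))
    (hv₂ : v₂ = (Real.sqrt τ₂)⁻¹ • (τ₁, τ₂))
    (f : ℝ × ℝ → ℝ) (hf : Continuous f) (hpos : ∀ p, 0 < f p)
    (hper₁ : ∀ p, f (p + v₁) = f p) (hper₂ : ∀ p, f (p + v₂) = f p) :
    torusArea f v₁ v₂ - τ₂ * (torusSys f v₁ v₂) ^ 2 ≥ torusVar f v₁ v₂ :=
  loewner_with_defect_general τ₂ hτ₂ v₁ v₂ hv₁ f hf hpos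
end

section
/- For any lattice L ⊂ ℝ² of unit covolume, the first successive minimum satisfies λ₁(L)² ≤ 2/√3, with equality for the (rescaled) Eisenstein lattice ℤ·1 + ℤ·e^{iπ/3}. -/
/-- First successive minimum of the lattice `ℤv₁ + ℤv₂` in the Euclidean plane. -/
noncomputable def lambdaOne (v₁ v₂ : ℝ × ℝ) : ℝ :=
  sInf {x : ℝ | ∃ m n : ℤ, ¬(m = 0 ∧ n = 0) ∧ x = eNorm (m • v₁ + n • v₂)}

/-! Complete a primitive lattice vector `a` to a basis `a, b` of the lattice and translate `b` by
a multiple of `a` so that `|a · b| ≤ |a|² / 2`. Since `a ∧ b = ± covol` and `|b| ≥ λ₁`, Lagrange's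
identity `|a|² |b|² = (a ∧ b)² + (a · b)²` gives `|a|² λ₁² ≤ covol² + |a|⁴ / 4`, and letting `|a|`
approach `λ₁` yields `3 λ₁⁴ ≤ 4 covol²`. In the Eisenstein lattice the squared norms are
`(2/√3)(m² + mn + n²)`, and `m² + mn + n² ≥ 1` for `(m, n) ≠ 0`. -/

namespace Plane

def normSq (p : ℝ × ℝ) : ℝ := p.1 ^ 2 + p.2 ^ 2

def dot (a b : ℝ × ℝ) : ℝ := a.1 * b.1 + a.2 * b.2

def cross (a b : ℝ × ℝ) : ℝ := a.1 * b.2 - a.2 * b.1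

lemma normSq_nonneg (p : ℝ × ℝ) : 0 ≤ normSq p := by
  unfold normSq; positivity

lemma eNorm_eq_sqrt_normSq (p : ℝ × ℝ) : eNorm p = √(normSq p) := rfl

lemma normSq_mul_normSq (a b : ℝ × ℝ) :
    normSq a * normSq b = cross a b ^ 2 + dot a b ^ 2 := by
  unfold normSq cross dot; ring

lemma normSq_zsmul (k : ℤ) (p : ℝ × ℝ) : normSq (k • p) = (k : ℝ) ^ 2 * normSq p := by
  simp only [normSq, Prod.smul_fst, Prod.smul_snd]
  simp only [zsmul_eq_mul]; ring

lemma cross_zsmul_add_zsmul (v₁ v₂ : ℝ × ℝ) (m n p q : ℤ) :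
    cross (m • v₁ + n • v₂) (p • v₁ + q • v₂) = ((m * q - n * p : ℤ) : ℝ) * cross v₁ v₂ := by
  simp only [cross, Prod.fst_add, Prod.snd_add, Prod.smul_fst, Prod.smul_snd]
  simp only [zsmul_eq_mul]; push_cast; ring

lemma exists_abs_dot_add_zsmul_le (a b : ℝ × ℝ) :
    ∃ k : ℤ, |dot a (b + k • a)| ≤ normSq a / 2 := by
  have hdot (k : ℤ) : dot a (b + k • a) = dot a b + k * normSq a := by
    simp only [dot, normSq, Prod.fst_add, Prod.snd_add, Prod.smul_fst, Prod.smul_snd]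
    simp only [zsmul_eq_mul]; ring
  rcases (normSq_nonneg a).eq_or_lt with h0 | hpos
  · refine ⟨0, ?_⟩
    have ha : a.1 = 0 ∧ a.2 = 0 := by
      unfold normSq at h0; constructor <;> nlinarith [sq_nonneg a.1, sq_nonneg a.2]
    simp [dot, ← h0, ha]
  · refine ⟨-round (dot a b / normSq a), ?_⟩
    have hr : dot a b + (-round (dot a b / normSq a) : ℤ) * normSq a
        = normSq a * (dot a b / normSq a - round (dot a b / normSq a)) := by
      push_cast; field_simp; ring
    rw [hdot, hr, abs_mul, abs_of_pos hpos]
    linarith [mul_le_mul_of_nonneg_left (abs_sub_round (dot a b / normSq a)) hpos.le]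

end Plane

open Plane

section Lattice

variable (v₁ v₂ : ℝ × ℝ)

lemma lambdaOne_nonneg : 0 ≤ lambdaOne v₁ v₂ :=
  Real.sInf_nonneg fun _ ⟨_, _, _, hx⟩ => hx ▸ Real.sqrt_nonneg _

lemma lambdaOne_le_eNorm {m n : ℤ} (h : ¬(m = 0 ∧ n = 0)) :
    lambdaOne v₁ v₂ ≤ eNorm (m • v₁ + n • v₂) :=
  csInf_le ⟨0, fun _ ⟨_, _, _, hx⟩ => hx ▸ Real.sqrt_nonneg _⟩ ⟨m, n, h, rfl⟩

lemma sq_lambdaOne_le_normSq {m n : ℤ} (h : ¬(m = 0 ∧ n = 0)) :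
    lambdaOne v₁ v₂ ^ 2 ≤ normSq (m • v₁ + n • v₂) := by
  rw [← Real.sq_sqrt (normSq_nonneg _)]
  exact pow_le_pow_left₀ (lambdaOne_nonneg v₁ v₂) (lambdaOne_le_eNorm v₁ v₂ h) 2

lemma exists_normSq_lt_of_lambdaOne_lt {r : ℝ} (hr : lambdaOne v₁ v₂ < r) :
    ∃ m n : ℤ, ¬(m = 0 ∧ n = 0) ∧ normSq (m • v₁ + n • v₂) < r ^ 2 := by
  unfold lambdaOne at hr
  obtain ⟨_, ⟨m, n, h, rfl⟩, hlt⟩ :=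
    exists_lt_of_csInf_lt (by exact ⟨_, 1, 0, by simp, rfl⟩) hr
  refine ⟨m, n, h, ?_⟩
  rw [eNorm_eq_sqrt_normSq] at hlt
  exact (Real.sqrt_lt' ((Real.sqrt_nonneg _).trans_lt hlt)).mp hlt

lemma exists_gcd_eq_one_normSq_le {m n : ℤ} (h : ¬(m = 0 ∧ n = 0)) :
    ∃ m' n' : ℤ, Int.gcd m' n' = 1 ∧ normSq (m' • v₁ + n' • v₂) ≤ normSq (m • v₁ + n • v₂) := by
  obtain ⟨g, m', n', hg, hgcd, rfl, rfl⟩ :=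
    Int.exists_gcd_one' (Int.gcd_pos_iff.mpr (by tauto))
  refine ⟨m', n', hgcd, ?_⟩
  have hsmul : (m' * g) • v₁ + (n' * g) • v₂ = (g : ℤ) • (m' • v₁ + n' • v₂) := by
    rw [smul_add, ← mul_smul, ← mul_smul, mul_comm (g : ℤ), mul_comm (g : ℤ)]
  have hg1 : (1 : ℝ) ≤ ((g : ℤ) : ℝ) ^ 2 := by
    push_cast; exact one_le_pow₀ (by exact_mod_cast hg)
  rw [hsmul, normSq_zsmul]
  exact le_mul_of_one_le_left (normSq_nonneg _) hg1

lemma normSq_mul_sq_lambdaOne_le {m n : ℤ} (hmn : Int.gcd m n = 1) :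
    normSq (m • v₁ + n • v₂) * lambdaOne v₁ v₂ ^ 2 ≤
      cross v₁ v₂ ^ 2 + normSq (m • v₁ + n • v₂) ^ 2 / 4 := by
  obtain ⟨u, w, huw⟩ := Int.isCoprime_iff_gcd_eq_one.mpr hmn
  set a := m • v₁ + n • v₂
  obtain ⟨k, hk⟩ := exists_abs_dot_add_zsmul_le a ((-w) • v₁ + u • v₂)
  set p := -w + k * m
  set q := u + k * n
  have hb : (-w) • v₁ + u • v₂ + k • a = p • v₁ + q • v₂ := by
    simp only [a, p, q, smul_add, add_smul, mul_smul]; abel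
  have hdet : m * q - n * p = 1 := by simp only [p, q]; linear_combination huw
  have hpq : ¬(p = 0 ∧ q = 0) := fun ⟨hp, hq⟩ => by simp [hp, hq] at hdet
  rw [hb] at hk
  have hcross : cross a (p • v₁ + q • v₂) = cross v₁ v₂ := by
    rw [cross_zsmul_add_zsmul, hdet, Int.cast_one, one_mul]
  have hdot : dot a (p • v₁ + q • v₂) ^ 2 ≤ normSq a ^ 2 / 4 := by
    nlinarith [sq_abs (dot a (p • v₁ + q • v₂)), abs_nonneg (dot a (p • v₁ + q • v₂))]
  calc normSq a * lambdaOne v₁ v₂ ^ 2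
      ≤ normSq a * normSq (p • v₁ + q • v₂) :=
        mul_le_mul_of_nonneg_left (sq_lambdaOne_le_normSq v₁ v₂ hpq) (normSq_nonneg a)
    _ = cross v₁ v₂ ^ 2 + dot a (p • v₁ + q • v₂) ^ 2 := by rw [normSq_mul_normSq, hcross]
    _ ≤ cross v₁ v₂ ^ 2 + normSq a ^ 2 / 4 := by linarith

theorem three_mul_sq_sq_lambdaOne_le : 3 * (lambdaOne v₁ v₂ ^ 2) ^ 2 ≤ 4 * cross v₁ v₂ ^ 2 := by
  rcases (lambdaOne_nonneg v₁ v₂).eq_or_lt with h0 | hpos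
  · rw [← h0]; nlinarith [sq_nonneg (cross v₁ v₂)]
  set ℓ := lambdaOne v₁ v₂
  obtain ⟨m, n, hmn, hlt⟩ := exists_normSq_lt_of_lambdaOne_lt v₁ v₂ (r := 3 / 2 * ℓ) (by linarith)
  obtain ⟨m', n', hgcd, hle⟩ := exists_gcd_eq_one_normSq_le v₁ v₂ hmn
  have hne : ¬(m' = 0 ∧ n' = 0) := fun ⟨h₁, h₂⟩ => by simp [h₁, h₂] at hgcd
  have hlow := sq_lambdaOne_le_normSq v₁ v₂ hne
  have hkey := normSq_mul_sq_lambdaOne_le v₁ v₂ hgcd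
  set A := normSq (m' • v₁ + n' • v₂)
  -- on `ℓ² ≤ A ≤ 3ℓ²`, `A ℓ² - A² / 4` is at least its value `3ℓ⁴ / 4` at `A = ℓ²`
  nlinarith [mul_nonneg (sub_nonneg.mpr hlow) (by nlinarith : 0 ≤ 3 * ℓ ^ 2 - A)]

theorem sq_lambdaOne_le_mul_abs_cross :
    lambdaOne v₁ v₂ ^ 2 ≤ 2 / √3 * |cross v₁ v₂| := by
  have h3 : (0 : ℝ) < √3 := by positivity
  rw [div_mul_eq_mul_div, le_div_iff₀ h3,
    ← pow_le_pow_iff_left₀ (by positivity) (by positivity) two_ne_zero, mul_pow, mul_pow,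
    Real.sq_sqrt zero_le_three, sq_abs]
  linarith [three_mul_sq_sq_lambdaOne_le v₁ v₂]

end Lattice

lemma Int.one_le_sq_add_mul_add_sq {m n : ℤ} (h : ¬(m = 0 ∧ n = 0)) :
    1 ≤ m ^ 2 + m * n + n ^ 2 := by
  rcases eq_or_ne n 0 with rfl | hn
  · have hm : m ≠ 0 := fun hm => h ⟨hm, rfl⟩
    nlinarith [sq_pos_of_ne_zero hm]
  · nlinarith [sq_pos_of_ne_zero hn, sq_nonneg (2 * m + n)]

lemma normSq_eisenstein (s : ℝ) (m n : ℤ) :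
    normSq (m • (s • ((1 : ℝ), (0 : ℝ))) + n • (s • ((1 / 2 : ℝ), √3 / 2))) =
      s ^ 2 * (m ^ 2 + m * n + n ^ 2) := by
  simp only [normSq, Prod.fst_add, Prod.snd_add, Prod.smul_mk]
  simp only [zsmul_eq_mul, smul_eq_mul]
  linear_combination (n : ℝ) ^ 2 * s ^ 2 / 4 * Real.sq_sqrt zero_le_three

lemma lambdaOne_eisenstein {s : ℝ} (hs : 0 ≤ s) :
    lambdaOne (s • ((1 : ℝ), (0 : ℝ))) (s • ((1 / 2 : ℝ), √3 / 2)) = s := by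
  refine IsLeast.csInf_eq ⟨⟨1, 0, by simp, ?_⟩, ?_⟩
  · rw [eNorm_eq_sqrt_normSq, normSq_eisenstein]; norm_num [Real.sqrt_sq hs]
  · rintro _ ⟨m, n, h, rfl⟩
    rw [eNorm_eq_sqrt_normSq, normSq_eisenstein]
    refine Real.le_sqrt_of_sq_le ?_
    refine le_mul_of_one_le_right (sq_nonneg s) ?_
    exact_mod_cast Int.one_le_sq_add_mul_add_sq h

/-- For any lattice of unit covolume in the plane, `λ₁(L)² ≤ 2/√3` (the Hermite
constant `γ₂`), with equality for the rescaled Eisenstein lattice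
`ℤ·1 + ℤ·e^{iπ/3}`. -/
theorem hermite_constant_two :
    (∀ v₁ v₂ : ℝ × ℝ, |v₁.1 * v₂.2 - v₁.2 * v₂.1| = 1 →
      (lambdaOne v₁ v₂) ^ 2 ≤ 2 / Real.sqrt 3) ∧
    (lambdaOne (Real.sqrt (2 / Real.sqrt 3) • ((1:ℝ), (0:ℝ)))
        (Real.sqrt (2 / Real.sqrt 3) • ((1 / 2 : ℝ), Real.sqrt 3 / 2))) ^ 2 =
      2 / Real.sqrt 3 := by
  refine ⟨fun v₁ v₂ hcovol => ?_, ?_⟩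
  · simpa [cross, hcovol] using sq_lambdaOne_le_mul_abs_cross v₁ v₂
  · rw [lambdaOne_eisenstein (Real.sqrt_nonneg _), Real.sq_sqrt (by positivity)]
end
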